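/- Let G be a coverable signed K4-minor-free graph that has no signed circuit 6-cover and has the minimum number of edges among all such signed graphs. Then no two negative loops of G share a common vertex. -/

import Mathlib

/-!
Common framework: signed multigraphs represented by finite vertex/edge sets over ℕ,
an incidence map into `Sym2 ℕ` and a sign map into `ℤ`.
-/

structure SignedGraph where
  verts : Finset ℕ
  edges : Finset ℕ
  ends : ℕ → Sym2 ℕ
  sgn : ℕ → ℤ
  ends_mem : ∀ e ∈ edges, ∀ v ∈ ends e, v ∈ verts
  sgn_unit : ∀ e ∈ edges, sgn e = 1 ∨ sgn e = -1

namespace SignedGraph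

/-- `H` is a (signed) subgraph of `G`. -/
def IsSubgraph (H G : SignedGraph) : Prop :=
  H.verts ⊆ G.verts ∧ H.edges ⊆ G.edges ∧
    ∀ e ∈ H.edges, H.ends e = G.ends e ∧ H.sgn e = G.sgn e

/-- `G` is the union of its subgraphs `H₁` and `H₂`. -/
def IsUnion (G H₁ H₂ : SignedGraph) : Prop :=
  IsSubgraph H₁ G ∧ IsSubgraph H₂ G ∧
    G.verts = H₁.verts ∪ H₂.verts ∧ G.edges = H₁.edges ∪ H₂.edges

/-- `G` is the union of its subgraphs `H₁`, `H₂` and `H₃`. -/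
def IsUnion3 (G H₁ H₂ H₃ : SignedGraph) : Prop :=
  IsSubgraph H₁ G ∧ IsSubgraph H₂ G ∧ IsSubgraph H₃ G ∧
    G.verts = H₁.verts ∪ H₂.verts ∪ H₃.verts ∧
    G.edges = H₁.edges ∪ H₂.edges ∪ H₃.edges

/-- Degree of a vertex: a loop contributes 2, an ordinary incident edge 1. -/
def degree (G : SignedGraph) (v : ℕ) : ℕ :=
  ∑ e ∈ G.edges, (if G.ends e = s(v, v) then 2 else if v ∈ G.ends e then 1 else 0)

/-- Adjacency via some edge. -/
def Adj (G : SignedGraph) (u v : ℕ) : Prop := ∃ e ∈ G.edges, G.ends e = s(u, v)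

/-- `G` is connected (and nonempty). -/
def Connected (G : SignedGraph) : Prop :=
  G.verts.Nonempty ∧ ∀ u ∈ G.verts, ∀ v ∈ G.verts, Relation.ReflTransGen G.Adj u v

/-- Number of negative edges. -/
def negEdgeCount (G : SignedGraph) : ℕ := (G.edges.filter fun e => G.sgn e = -1).card

/-- A circuit: a connected 2-regular graph. -/
def IsCircuit (C : SignedGraph) : Prop :=
  C.Connected ∧ C.edges.Nonempty ∧ ∀ v ∈ C.verts, C.degree v = 2

/-- A balanced circuit: evenly many negative edges. -/
def IsBalancedCircuit (C : SignedGraph) : Prop := C.IsCircuit ∧ C.negEdgeCount % 2 = 0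

def IsUnbalancedCircuit (C : SignedGraph) : Prop := C.IsCircuit ∧ C.negEdgeCount % 2 = 1

/-- `P` is an `x y`-path (possibly trivial, i.e. a single vertex, when `x = y`). -/
def IsPath (P : SignedGraph) (x y : ℕ) : Prop :=
  (x = y ∧ P.verts = {x} ∧ P.edges = ∅) ∨
  (x ≠ y ∧ P.Connected ∧ x ∈ P.verts ∧ y ∈ P.verts ∧
    P.degree x = 1 ∧ P.degree y = 1 ∧
    ∀ v ∈ P.verts, v ≠ x → v ≠ y → P.degree v = 2)

/-- Sign of a subgraph: the product of the signs of its edges. -/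
def sgnOf (P : SignedGraph) : ℤ := ∏ e ∈ P.edges, P.sgn e

/-- `T` is a tadpole at `x`: union of an `x y`-path and an unbalanced circuit
meeting the path exactly in its end `y`. -/
def IsTadpoleAt (T : SignedGraph) (x : ℕ) : Prop :=
  ∃ y P C, T.IsUnion P C ∧ IsPath P x y ∧ IsUnbalancedCircuit C ∧
    P.verts ∩ C.verts = {y} ∧ P.edges ∩ C.edges = ∅

/-- `T` is a tadpole at `x` whose tadpole-path contains the edge `e₀`. -/
def TadpolePathContains (T : SignedGraph) (x e₀ : ℕ) : Prop :=
  ∃ y P C, T.IsUnion P C ∧ IsPath P x y ∧ IsUnbalancedCircuit C ∧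
    P.verts ∩ C.verts = {y} ∧ P.edges ∩ C.edges = ∅ ∧ e₀ ∈ P.edges

/-- `T` is a tadpole at `x` whose unbalanced circuit lies in `K`. -/
def IsTadpoleWithCircuitIn (T : SignedGraph) (x : ℕ) (K : SignedGraph) : Prop :=
  ∃ y P C, T.IsUnion P C ∧ IsPath P x y ∧ IsUnbalancedCircuit C ∧
    P.verts ∩ C.verts = {y} ∧ P.edges ∩ C.edges = ∅ ∧ IsSubgraph C K

/-- A barbell: two unbalanced circuits joined by a (possibly trivial) path meeting
the circuits only in its ends. -/
def IsBarbell (B : SignedGraph) : Prop :=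
  ∃ x y P C₁ C₂, IsPath P x y ∧ IsUnbalancedCircuit C₁ ∧ IsUnbalancedCircuit C₂ ∧
    IsUnion3 B P C₁ C₂ ∧
    P.verts ∩ C₁.verts = {x} ∧ P.verts ∩ C₂.verts = {y} ∧
    C₁.verts ∩ C₂.verts = ({x} : Finset ℕ) ∩ ({y} : Finset ℕ) ∧
    P.edges ∩ C₁.edges = ∅ ∧ P.edges ∩ C₂.edges = ∅ ∧ C₁.edges ∩ C₂.edges = ∅

/-- A signed circuit: a balanced circuit or a barbell. -/
def IsSignedCircuit (S : SignedGraph) : Prop := IsBalancedCircuit S ∨ IsBarbell S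

/-- The number of members of the family `F` (with multiplicity) containing the edge `e`. -/
def coverCount (F : Multiset SignedGraph) (e : ℕ) : ℕ :=
  Multiset.card (F.filter fun S => e ∈ S.edges)

/-- `F` is a signed circuit `k`-cover of `G`. -/
def IsSignedCircuitCover (G : SignedGraph) (k : ℕ) (F : Multiset SignedGraph) : Prop :=
  (∀ S ∈ F, IsSubgraph S G ∧ IsSignedCircuit S) ∧ ∀ e ∈ G.edges, coverCount F e = k

def HasSixCover (G : SignedGraph) : Prop := ∃ F, IsSignedCircuitCover G 6 F

/-- `G` is coverable: some family of signed circuits covers every edge at least once. -/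
def Coverable (G : SignedGraph) : Prop :=
  ∃ F : Multiset SignedGraph, (∀ S ∈ F, IsSubgraph S G ∧ IsSignedCircuit S) ∧
    ∀ e ∈ G.edges, 0 < coverCount F e

/-- The vertex set `W` is connected within `G`. -/
def ConnectedWithin (G : SignedGraph) (W : Finset ℕ) : Prop :=
  ∀ u ∈ W, ∀ v ∈ W,
    Relation.ReflTransGen (fun a b => a ∈ W ∧ b ∈ W ∧ G.Adj a b) u v

/-- `G` has a `K₄`-minor (branch-set characterization). -/
def HasK4Minor (G : SignedGraph) : Prop :=
  ∃ B : Fin 4 → Finset ℕ,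
    (∀ i, (B i).Nonempty) ∧ (∀ i, B i ⊆ G.verts) ∧
    (∀ i j, i ≠ j → Disjoint (B i) (B j)) ∧
    (∀ i, G.ConnectedWithin (B i)) ∧
    (∀ i j, i ≠ j → ∃ e ∈ G.edges, ∃ u ∈ B i, ∃ v ∈ B j, G.ends e = s(u, v))

def K4MinorFree (G : SignedGraph) : Prop := ¬ G.HasK4Minor

/-- `H` is obtained from `G` by a sequence of switchings. -/
def SEquiv (G H : SignedGraph) : Prop :=
  G.verts = H.verts ∧ G.edges = H.edges ∧ (∀ e ∈ G.edges, G.ends e = H.ends e) ∧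
  ∃ χ : ℕ → ℤ, (∀ v, χ v = 1 ∨ χ v = -1) ∧
    ∀ e ∈ G.edges, ∀ u v, G.ends e = s(u, v) → H.sgn e = χ u * χ v * G.sgn e

/-- The negativeness of `G`: minimum number of negative edges over all equivalent graphs. -/
noncomputable def negativeness (G : SignedGraph) : ℕ :=
  sInf {n | ∃ H, SEquiv G H ∧ H.negEdgeCount = n}

/-- `G` is balanced: equivalent to a graph with no negative edges. -/
def Balanced (G : SignedGraph) : Prop := ∃ H, SEquiv G H ∧ H.negEdgeCount = 0

/-- Deleting a set of edges. -/
def deleteEdges (G : SignedGraph) (S : Finset ℕ) : SignedGraph where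
  verts := G.verts
  edges := G.edges \ S
  ends := G.ends
  sgn := G.sgn
  ends_mem := fun e he v hv => G.ends_mem e (Finset.mem_sdiff.mp he).1 v hv
  sgn_unit := fun e he => G.sgn_unit e (Finset.mem_sdiff.mp he).1

def deleteEdge (G : SignedGraph) (b : ℕ) : SignedGraph := G.deleteEdges {b}

/-- Deleting a vertex (and all incident edges). -/
def deleteVertex (G : SignedGraph) (x : ℕ) : SignedGraph where
  verts := G.verts.erase x
  edges := G.edges.filter fun e => x ∉ G.ends e
  ends := G.ends
  sgn := G.sgn
  ends_mem := by
    intro e he v hv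
    rw [Finset.mem_filter] at he
    exact Finset.mem_erase.mpr ⟨fun h => he.2 (h ▸ hv), G.ends_mem e he.1 v hv⟩
  sgn_unit := fun e he => G.sgn_unit e (Finset.mem_filter.mp he).1

/-- Deleting all loops. -/
def removeLoops (G : SignedGraph) : SignedGraph where
  verts := G.verts
  edges := G.edges.filter fun e => ¬ (G.ends e).IsDiag
  ends := G.ends
  sgn := G.sgn
  ends_mem := fun e he v hv => G.ends_mem e (Finset.mem_filter.mp he).1 v hv
  sgn_unit := fun e he => G.sgn_unit e (Finset.mem_filter.mp he).1

/-- `b` is a cut edge: deleting it disconnects its two ends. -/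
def IsCutEdge (G : SignedGraph) (b : ℕ) : Prop :=
  b ∈ G.edges ∧ ∃ u v, G.ends b = s(u, v) ∧
    ¬ Relation.ReflTransGen (G.deleteEdge b).Adj u v

/-- `H` is a connected component of `K`: a connected subgraph closed under incidence. -/
def IsComponent (K H : SignedGraph) : Prop :=
  IsSubgraph H K ∧ H.Connected ∧
    ∀ e ∈ K.edges, ∀ u v, K.ends e = s(u, v) → u ∈ H.verts → e ∈ H.edges ∧ v ∈ H.verts

/-- `G` is 2-connected: connected and without cut vertices. -/
def TwoConnected (G : SignedGraph) : Prop :=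
  G.Connected ∧ ∀ x ∈ G.verts, ∀ u ∈ (G.deleteVertex x).verts,
    ∀ v ∈ (G.deleteVertex x).verts, Relation.ReflTransGen (G.deleteVertex x).Adj u v

/-- A two-terminal signed graph with source `x` and target `y`
(`x = y` only for a single negative loop). -/
def IsTwoTerminal (H : SignedGraph) (x y : ℕ) : Prop :=
  H.Connected ∧ H.edges.Nonempty ∧ x ∈ H.verts ∧ y ∈ H.verts ∧
    (x = y → H.verts = {x} ∧ ∃ e, H.edges = {e} ∧ H.ends e = s(x, x) ∧ H.sgn e = -1)

/-- `H` is a piece of `G` at `{x, y}`: `G` is the parallel connection of `H`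
with another two-terminal graph. -/
def IsPiece (G H : SignedGraph) (x y : ℕ) : Prop :=
  IsTwoTerminal H x y ∧ ∃ H', IsTwoTerminal H' x y ∧ G.IsUnion H H' ∧
    H.verts ∩ H'.verts = ({x, y} : Finset ℕ) ∧ H.edges ∩ H'.edges = ∅

/-- `G` is the parallel connection of `H₁` and `H₂` with terminals `x ≠ y`. -/
def IsParallel2 (G H₁ H₂ : SignedGraph) (x y : ℕ) : Prop :=
  x ≠ y ∧ IsTwoTerminal H₁ x y ∧ IsTwoTerminal H₂ x y ∧
    G.IsUnion H₁ H₂ ∧ H₁.verts ∩ H₂.verts = ({x, y} : Finset ℕ) ∧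
    H₁.edges ∩ H₂.edges = ∅

/-- `G` is the parallel connection of the list `Hs` of pieces with terminals `x, y`. -/
def IsParallelDecomp (G : SignedGraph) (Hs : List SignedGraph) (x y : ℕ) : Prop :=
  x ≠ y ∧ (∀ H ∈ Hs, IsTwoTerminal H x y ∧ IsSubgraph H G) ∧
  Hs.Pairwise (fun H K => H.verts ∩ K.verts = ({x, y} : Finset ℕ) ∧ H.edges ∩ K.edges = ∅) ∧
  G.verts = Hs.foldr (fun H s => H.verts ∪ s) ∅ ∧
  G.edges = Hs.foldr (fun H s => H.edges ∪ s) ∅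

/-- `G` is the series connection of the two-terminal graphs `B 1, …, B n`,
where `B i` has terminals `xs (i-1)` and `xs i`. -/
def IsSeriesConn (G : SignedGraph) (n : ℕ) (B : ℕ → SignedGraph) (xs : ℕ → ℕ) : Prop :=
  1 ≤ n ∧
  (∀ i ∈ Finset.Icc 1 n, IsTwoTerminal (B i) (xs (i - 1)) (xs i)) ∧
  (∀ i ∈ Finset.Icc 1 n, IsSubgraph (B i) G) ∧
  G.verts = (Finset.Icc 1 n).biUnion (fun i => (B i).verts) ∧
  G.edges = (Finset.Icc 1 n).biUnion (fun i => (B i).edges) ∧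
  (∀ i ∈ Finset.Icc 1 n, ∀ j ∈ Finset.Icc 1 n, i < j →
    (B i).edges ∩ (B j).edges = ∅ ∧
    (B i).verts ∩ (B j).verts =
      ({xs (i - 1), xs i} : Finset ℕ) ∩ ({xs (j - 1), xs j} : Finset ℕ))

/-- The structured parts of a `Ψ_{xy}(t)`-cover of `H`:
`t` positive `xy`-paths, `t` negative `xy`-paths, `t` tadpoles at `x`,
`6 - 2t` tadpoles at `y`, and some signed circuits, forming a signed subgraph 6-cover. -/
def IsPsiCoverParts (H : SignedGraph) (x y : ℕ) (t : ℕ)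
    (Fp Fn Fx Fy Fc : Multiset SignedGraph) : Prop :=
  t ≤ 3 ∧
  (∀ S ∈ Fp + Fn + Fx + Fy + Fc, IsSubgraph S H) ∧
  (∀ e ∈ H.edges, coverCount (Fp + Fn + Fx + Fy + Fc) e = 6) ∧
  Multiset.card Fp = t ∧ Multiset.card Fn = t ∧
  Multiset.card Fx = t ∧ Multiset.card Fy = 6 - 2 * t ∧
  (∀ P ∈ Fp, IsPath P x y ∧ sgnOf P = 1) ∧
  (∀ P ∈ Fn, IsPath P x y ∧ sgnOf P = -1) ∧
  (∀ T ∈ Fx, IsTadpoleAt T x) ∧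
  (∀ T ∈ Fy, IsTadpoleAt T y) ∧
  (∀ C ∈ Fc, IsSignedCircuit C)

/-- `H` has a `Ψ_{xy}(t)`-cover. -/
def HasPsiCover (H : SignedGraph) (x y : ℕ) (t : ℕ) : Prop :=
  ∃ Fp Fn Fx Fy Fc, IsPsiCoverParts H x y t Fp Fn Fx Fy Fc

/-- `H` has a `Ψ_{xy}(2)`-cover in which no tadpole at `x` contains `y` and
no tadpole at `y` contains `x`. -/
def HasPsi2NoCross (H : SignedGraph) (x y : ℕ) : Prop :=
  ∃ Fp Fn Fx Fy Fc, IsPsiCoverParts H x y 2 Fp Fn Fx Fy Fc ∧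
    (∀ T ∈ Fx, y ∉ T.verts) ∧ (∀ T ∈ Fy, x ∉ T.verts)

/-- The structured parts of a `Ψ*_{xy}(2)`-cover of `H` relative to the edge `e₀ = xy`. -/
def IsPsiStarCoverParts (H : SignedGraph) (x y e₀ : ℕ)
    (Fp Fn Fc : Multiset SignedGraph) (Tx₁ Tx₂ Ty₁ Ty₂ : SignedGraph) : Prop :=
  e₀ ∈ H.edges ∧ H.ends e₀ = s(x, y) ∧
  IsPsiCoverParts H x y 2 Fp Fn {Tx₁, Tx₂} {Ty₁, Ty₂} Fc ∧
  y ∉ Tx₁.verts ∧ TadpolePathContains Tx₂ x e₀ ∧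
  x ∉ Ty₁.verts ∧ TadpolePathContains Ty₂ y e₀

/-- `H` has a `Ψ*_{xy}(2)`-cover. -/
def HasPsiStarCover (H : SignedGraph) (x y : ℕ) : Prop :=
  ∃ e₀ Fp Fn Fc Tx₁ Tx₂ Ty₁ Ty₂, IsPsiStarCoverParts H x y e₀ Fp Fn Fc Tx₁ Tx₂ Ty₁ Ty₂

/-- The signed graph `R₀(x, y)`: an unbalanced 2-circuit on `x, y`. -/
def IsR0 (H : SignedGraph) (x y : ℕ) : Prop :=
  x ≠ y ∧ H.verts = {x, y} ∧
  ∃ e f, e ≠ f ∧ H.edges = {e, f} ∧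
    H.ends e = s(x, y) ∧ H.sgn e = 1 ∧ H.ends f = s(x, y) ∧ H.sgn f = -1

/-- The signed graph `R₁(x, y)`: a positive triangle on `x, y, z` with a negative loop at `z`. -/
def IsR1 (H : SignedGraph) (x y : ℕ) : Prop :=
  ∃ z, x ≠ y ∧ x ≠ z ∧ y ≠ z ∧ H.verts = {x, y, z} ∧
  ∃ e₁ e₂ e₃ e₄, [e₁, e₂, e₃, e₄].Nodup ∧ H.edges = {e₁, e₂, e₃, e₄} ∧
    H.ends e₁ = s(x, y) ∧ H.sgn e₁ = 1 ∧
    H.ends e₂ = s(y, z) ∧ H.sgn e₂ = 1 ∧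
    H.ends e₃ = s(z, x) ∧ H.sgn e₃ = 1 ∧
    H.ends e₄ = s(z, z) ∧ H.sgn e₄ = -1

/-- The signed graph `R₂(x, y)`: a positive triangle on `x, y, w` with an extra
negative edge joining `w` and `y`. -/
def IsR2 (H : SignedGraph) (x y : ℕ) : Prop :=
  ∃ w, x ≠ y ∧ x ≠ w ∧ y ≠ w ∧ H.verts = {x, y, w} ∧
  ∃ e₁ e₂ e₃ e₄, [e₁, e₂, e₃, e₄].Nodup ∧ H.edges = {e₁, e₂, e₃, e₄} ∧
    H.ends e₁ = s(x, y) ∧ H.sgn e₁ = 1 ∧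
    H.ends e₂ = s(y, w) ∧ H.sgn e₂ = 1 ∧
    H.ends e₃ = s(w, x) ∧ H.sgn e₃ = 1 ∧
    H.ends e₄ = s(w, y) ∧ H.sgn e₄ = -1

/-- The signed graph `R₃(x, y)`: a positive 4-circuit `x y u w x` with an extra
negative edge joining `w` and `u`. -/
def IsR3 (H : SignedGraph) (x y : ℕ) : Prop :=
  ∃ u w, [x, y, u, w].Nodup ∧ H.verts = {x, y, u, w} ∧
  ∃ e₁ e₂ e₃ e₄ e₅, [e₁, e₂, e₃, e₄, e₅].Nodup ∧ H.edges = {e₁, e₂, e₃, e₄, e₅} ∧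
    H.ends e₁ = s(x, y) ∧ H.sgn e₁ = 1 ∧
    H.ends e₂ = s(y, u) ∧ H.sgn e₂ = 1 ∧
    H.ends e₃ = s(u, w) ∧ H.sgn e₃ = 1 ∧
    H.ends e₄ = s(w, x) ∧ H.sgn e₄ = 1 ∧
    H.ends e₅ = s(w, u) ∧ H.sgn e₅ = -1

/-- The signed graph `R₄(x, y)`: `R₃(x, y)` with an extra positive edge joining `x` and `u`. -/
def IsR4 (H : SignedGraph) (x y : ℕ) : Prop :=
  ∃ u w, [x, y, u, w].Nodup ∧ H.verts = {x, y, u, w} ∧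
  ∃ e₁ e₂ e₃ e₄ e₅ e₆, [e₁, e₂, e₃, e₄, e₅, e₆].Nodup ∧
    H.edges = {e₁, e₂, e₃, e₄, e₅, e₆} ∧
    H.ends e₁ = s(x, y) ∧ H.sgn e₁ = 1 ∧
    H.ends e₂ = s(y, u) ∧ H.sgn e₂ = 1 ∧
    H.ends e₃ = s(u, w) ∧ H.sgn e₃ = 1 ∧
    H.ends e₄ = s(w, x) ∧ H.sgn e₄ = 1 ∧
    H.ends e₅ = s(w, u) ∧ H.sgn e₅ = -1 ∧
    H.ends e₆ = s(x, u) ∧ H.sgn e₆ = 1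

/-- The signed graph `R₅(x, y)`: vertices `x, y, u, t, v`, positive edges
`vx, xy, yu, xu, ut, tv` and a negative edge joining `t` and `v`. -/
def IsR5 (H : SignedGraph) (x y : ℕ) : Prop :=
  ∃ u t v, [x, y, u, t, v].Nodup ∧ H.verts = {x, y, u, t, v} ∧
  ∃ e₁ e₂ e₃ e₄ e₅ e₆ e₇, [e₁, e₂, e₃, e₄, e₅, e₆, e₇].Nodup ∧
    H.edges = {e₁, e₂, e₃, e₄, e₅, e₆, e₇} ∧
    H.ends e₁ = s(v, x) ∧ H.sgn e₁ = 1 ∧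
    H.ends e₂ = s(x, y) ∧ H.sgn e₂ = 1 ∧
    H.ends e₃ = s(y, u) ∧ H.sgn e₃ = 1 ∧
    H.ends e₄ = s(x, u) ∧ H.sgn e₄ = 1 ∧
    H.ends e₅ = s(u, t) ∧ H.sgn e₅ = 1 ∧
    H.ends e₆ = s(t, v) ∧ H.sgn e₆ = 1 ∧
    H.ends e₇ = s(t, v) ∧ H.sgn e₇ = -1

/-- The two-terminal signed graph `D₁(x, y)`: vertices `x, z, y`, positive edges
`xz` and `zy`, and one negative edge parallel to `xz`. -/
def IsD1 (H : SignedGraph) (x y : ℕ) : Prop :=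
  ∃ z, x ≠ y ∧ x ≠ z ∧ y ≠ z ∧ H.verts = {x, z, y} ∧
  ∃ e₁ e₂ e₃, [e₁, e₂, e₃].Nodup ∧ H.edges = {e₁, e₂, e₃} ∧
    H.ends e₁ = s(x, z) ∧ H.sgn e₁ = 1 ∧
    H.ends e₂ = s(z, y) ∧ H.sgn e₂ = 1 ∧
    H.ends e₃ = s(x, z) ∧ H.sgn e₃ = -1

/-- The two-terminal signed graph `D₂(x, y)`: a positive path `x u v y` together
with one negative edge parallel to `uv`. -/
def IsD2 (H : SignedGraph) (x y : ℕ) : Prop :=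
  ∃ u v, [x, u, v, y].Nodup ∧ H.verts = {x, u, v, y} ∧
  ∃ e₁ e₂ e₃ e₄, [e₁, e₂, e₃, e₄].Nodup ∧ H.edges = {e₁, e₂, e₃, e₄} ∧
    H.ends e₁ = s(x, u) ∧ H.sgn e₁ = 1 ∧
    H.ends e₂ = s(u, v) ∧ H.sgn e₂ = 1 ∧
    H.ends e₃ = s(v, y) ∧ H.sgn e₃ = 1 ∧
    H.ends e₄ = s(u, v) ∧ H.sgn e₄ = -1

/-- `G` is the graph `P(H₁ ∪ y₁z, H₂ ∪ y₂z)`: the two-terminal graphs `H₁(x, y₁)`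
and `H₂(x, y₂)` glued at `x`, each extended by a new edge to a new vertex `z`. -/
def IsTwoBlockConn (G H₁ H₂ : SignedGraph) (x y₁ y₂ z e₁ e₂ : ℕ) : Prop :=
  IsTwoTerminal H₁ x y₁ ∧ IsTwoTerminal H₂ x y₂ ∧
  H₁.verts ∩ H₂.verts = {x} ∧ H₁.edges ∩ H₂.edges = ∅ ∧
  z ∉ H₁.verts ∧ z ∉ H₂.verts ∧
  e₁ ∉ H₁.edges ∧ e₁ ∉ H₂.edges ∧ e₂ ∉ H₁.edges ∧ e₂ ∉ H₂.edges ∧ e₁ ≠ e₂ ∧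
  G.verts = insert z (H₁.verts ∪ H₂.verts) ∧
  G.edges = insert e₁ (insert e₂ (H₁.edges ∪ H₂.edges)) ∧
  IsSubgraph H₁ G ∧ IsSubgraph H₂ G ∧
  G.ends e₁ = s(y₁, z) ∧ G.ends e₂ = s(y₂, z) ∧
  (G.sgn e₁ = 1 ∨ G.sgn e₁ = -1) ∧ (G.sgn e₂ = 1 ∨ G.sgn e₂ = -1)

/-- `G'` is obtained from `G` by adding a new negative loop `ℓ` at `x`. -/
def IsAddNegLoop (G' G : SignedGraph) (x ℓ : ℕ) : Prop :=
  x ∈ G.verts ∧ ℓ ∉ G.edges ∧ G'.verts = G.verts ∧ G'.edges = insert ℓ G.edges ∧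
  IsSubgraph G G' ∧ G'.ends ℓ = s(x, x) ∧ G'.sgn ℓ = -1

/-- A minimal counterexample to the main theorem: a coverable signed
`K₄`-minor-free graph without a signed circuit 6-cover, with the minimum
number of edges among all such graphs. -/
def MinimalCounterexample (G : SignedGraph) : Prop :=
  G.Coverable ∧ G.K4MinorFree ∧ ¬ G.HasSixCover ∧
    ∀ H : SignedGraph, H.Coverable → H.K4MinorFree → ¬ H.HasSixCover →
      G.edges.card ≤ H.edges.card

end SignedGraph

/-!
Two negative loops `e, f` at `v` form a barbell `B` with trivial path, and exchanging `e` and `f`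
is an automorphism of `G`. A signed circuit containing both loops is `B` itself. If some signed
circuit contains `e` but not `f`, then `G - f` is still coverable, and a 6-cover of it in which
three of the six circuits through `e` are rerouted through `f`, together with three copies of `B`,
is a 6-cover of `G`. Otherwise no signed circuit other than `B` meets `{e, f}`, so `G - e - f` is
coverable, and a 6-cover of it together with six copies of `B` is a 6-cover of `G`. Both
contradict the minimality of `G`.
-/

theorem Multiset.exists_le_card_eq {α : Type*} {s : Multiset α} {n : ℕ}
    (h : n ≤ Multiset.card s) : ∃ t ≤ s, Multiset.card t = n := by
  have hpos : 0 < Multiset.card (Multiset.powersetCard n s) := by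
    rw [Multiset.card_powersetCard]
    exact Nat.choose_pos h
  obtain ⟨t, ht⟩ := Multiset.card_pos_iff_exists_mem.mp hpos
  exact ⟨t, (Multiset.mem_powersetCard.mp ht).1, (Multiset.mem_powersetCard.mp ht).2⟩

namespace SignedGraph

section Subgraph

variable {H G : SignedGraph}

theorem IsSubgraph.adj (h : IsSubgraph H G) {u w : ℕ} (hadj : H.Adj u w) : G.Adj u w :=
  let ⟨g, hg, hends⟩ := hadj
  ⟨g, h.2.1 hg, (h.2.2 g hg).1.symm.trans hends⟩

theorem K4MinorFree.anti (h : IsSubgraph H G) (hG : G.K4MinorFree) : H.K4MinorFree := by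
  rintro ⟨B, hne, hsub, hdisj, hconn, hedge⟩
  refine hG ⟨B, hne, fun i => (hsub i).trans h.1, hdisj, fun i u hu w hw => ?_, fun i j hij => ?_⟩
  · exact Relation.ReflTransGen.mono (fun a b hab => ⟨hab.1, hab.2.1, h.adj hab.2.2⟩) _ _
      (hconn i u hu w hw)
  · obtain ⟨g, hg, u, hu, w, hw, hends⟩ := hedge i j hij
    exact ⟨g, h.2.1 hg, u, hu, w, hw, (h.2.2 g hg).1.symm.trans hends⟩

theorem deleteEdges_isSubgraph (G : SignedGraph) (D : Finset ℕ) : IsSubgraph (G.deleteEdges D) G :=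
  ⟨subset_rfl, Finset.sdiff_subset, fun _ _ => ⟨rfl, rfl⟩⟩

theorem isSubgraph_deleteEdges_iff {D : Finset ℕ} :
    IsSubgraph H (G.deleteEdges D) ↔ IsSubgraph H G ∧ Disjoint H.edges D := by
  simp only [IsSubgraph, deleteEdges, Finset.subset_sdiff]
  tauto

theorem IsSubgraph.notMem_of_deleteEdges {D : Finset ℕ} (h : IsSubgraph H (G.deleteEdges D))
    {g : ℕ} (hg : g ∈ D) : g ∉ H.edges := fun hgH =>
  Finset.disjoint_left.mp (isSubgraph_deleteEdges_iff.mp h).2 hgH hg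

end Subgraph

section Cover

theorem coverCount_add (F₁ F₂ : Multiset SignedGraph) (e : ℕ) :
    coverCount (F₁ + F₂) e = coverCount F₁ e + coverCount F₂ e := by
  simp [coverCount, Multiset.filter_add]

theorem coverCount_eq_zero {F : Multiset SignedGraph} {e : ℕ} (h : ∀ S ∈ F, e ∉ S.edges) :
    coverCount F e = 0 := by
  rw [coverCount, Multiset.filter_eq_nil.mpr h, Multiset.card_zero]

theorem coverCount_eq_card {F : Multiset SignedGraph} {e : ℕ} (h : ∀ S ∈ F, e ∈ S.edges) :
    coverCount F e = Multiset.card F := by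
  rw [coverCount, Multiset.filter_eq_self.mpr h]

theorem coverCount_replicate (n : ℕ) (S : SignedGraph) (e : ℕ) :
    coverCount (Multiset.replicate n S) e = if e ∈ S.edges then n else 0 := by
  split_ifs with h
  · rw [coverCount_eq_card fun T hT => Multiset.eq_of_mem_replicate hT ▸ h,
      Multiset.card_replicate]
  · exact coverCount_eq_zero fun T hT => Multiset.eq_of_mem_replicate hT ▸ h

theorem coverable_iff {G : SignedGraph} :
    G.Coverable ↔ ∀ e ∈ G.edges, ∃ S, IsSubgraph S G ∧ IsSignedCircuit S ∧ e ∈ S.edges := by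
  constructor
  · rintro ⟨F, hF, hcov⟩ e he
    obtain ⟨S, hS⟩ := Multiset.card_pos_iff_exists_mem.mp (hcov e he)
    rw [Multiset.mem_filter] at hS
    exact ⟨S, (hF S hS.1).1, (hF S hS.1).2, hS.2⟩
  · intro h
    have : Nonempty SignedGraph := ⟨G⟩
    choose! S hSG hSc heS using h
    refine ⟨G.edges.val.map S, ?_, fun e he => ?_⟩
    · simp only [Multiset.mem_map, Finset.mem_val]
      rintro _ ⟨e, he, rfl⟩
      exact ⟨hSG e he, hSc e he⟩
    · exact Multiset.card_pos_iff_exists_mem.mpr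
        ⟨S e, Multiset.mem_filter.mpr ⟨Multiset.mem_map_of_mem S he, heS e he⟩⟩

theorem coverable_deleteEdges_iff {G : SignedGraph} {D : Finset ℕ} :
    (G.deleteEdges D).Coverable ↔ ∀ e ∈ G.edges, e ∉ D →
      ∃ S, IsSubgraph S G ∧ IsSignedCircuit S ∧ e ∈ S.edges ∧ Disjoint S.edges D := by
  rw [coverable_iff]
  constructor
  · intro h e he heD
    obtain ⟨S, hSG, hSc, heS⟩ := h e (Finset.mem_sdiff.mpr ⟨he, heD⟩)
    obtain ⟨hSG, hdisj⟩ := isSubgraph_deleteEdges_iff.mp hSG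
    exact ⟨S, hSG, hSc, heS, hdisj⟩
  · intro h e he
    obtain ⟨S, hSG, hSc, heS, hdisj⟩ := h e (Finset.mem_sdiff.mp he).1 (Finset.mem_sdiff.mp he).2
    exact ⟨S, isSubgraph_deleteEdges_iff.mpr ⟨hSG, hdisj⟩, hSc, heS⟩

end Cover

section Loops

variable {G : SignedGraph} {v ℓ : ℕ}

theorem two_le_degree_of_loop (hl : ℓ ∈ G.edges) (he : G.ends ℓ = s(v, v)) : 2 ≤ G.degree v :=
  calc 2 = (if G.ends ℓ = s(v, v) then 2 else if v ∈ G.ends ℓ then 1 else 0) := by rw [if_pos he]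
    _ ≤ G.degree v := Finset.single_le_sum
        (f := fun e => if G.ends e = s(v, v) then 2 else if v ∈ G.ends e then 1 else 0)
        (fun _ _ => Nat.zero_le _) hl

theorem eq_loop_of_mem_ends (hl : ℓ ∈ G.edges) (he : G.ends ℓ = s(v, v))
    (hdeg : G.degree v = 2) {g : ℕ} (hg : g ∈ G.edges) (hv : v ∈ G.ends g) : g = ℓ := by
  by_contra hne
  have hpair : ({ℓ, g} : Finset ℕ) ⊆ G.edges := Finset.insert_subset hl (by simpa using hg)
  have hle := Finset.sum_le_sum_of_subset
    (f := fun e => if G.ends e = s(v, v) then 2 else if v ∈ G.ends e then 1 else 0) hpair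
  rw [Finset.sum_pair (Ne.symm hne), if_pos he] at hle
  change _ ≤ G.degree v at hle
  split_ifs at hle <;> omega

theorem Connected.eq_loop_of_degree_eq_two (hG : G.Connected) (hl : ℓ ∈ G.edges)
    (he : G.ends ℓ = s(v, v)) (hdeg : G.degree v = 2) : G.verts = {v} ∧ G.edges = {ℓ} := by
  have hv : v ∈ G.verts := G.ends_mem ℓ hl v (by simp [he])
  have hreach : ∀ u, Relation.ReflTransGen G.Adj v u → u = v := by
    intro u hu
    induction hu with
    | refl => rfl
    | tail _ hadj ih =>
      obtain ⟨g, hg, hends⟩ := hadj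
      subst ih
      rw [eq_loop_of_mem_ends hl he hdeg hg (by simp [hends]), he] at hends
      exact (Sym2.congr_right.mp hends).symm
  have hverts : G.verts = {v} :=
    Finset.eq_singleton_iff_unique_mem.mpr ⟨hv, fun u hu => hreach u (hG.2 v hv u hu)⟩
  refine ⟨hverts, Finset.eq_singleton_iff_unique_mem.mpr ⟨hl, fun g hg => ?_⟩⟩
  have hout := Sym2.out_fst_mem (G.ends g)
  have hv' : (G.ends g).out.1 = v := Finset.mem_singleton.mp (hverts ▸ G.ends_mem g hg _ hout)
  exact eq_loop_of_mem_ends hl he hdeg hg (hv' ▸ hout)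

theorem IsCircuit.eq_loop (hC : G.IsCircuit) (hl : ℓ ∈ G.edges) (he : G.ends ℓ = s(v, v)) :
    G.verts = {v} ∧ G.edges = {ℓ} :=
  hC.1.eq_loop_of_degree_eq_two hl he (hC.2.2 v (G.ends_mem ℓ hl v (by simp [he])))

theorem IsPath.not_loop {x y : ℕ} (hP : G.IsPath x y) (hl : ℓ ∈ G.edges)
    (he : G.ends ℓ = s(v, v)) : False := by
  rcases hP with ⟨-, -, hE⟩ | ⟨hxy, hconn, hx, hy, hdx, hdy, hdeg⟩
  · simp [hE] at hl
  have hv : v ∈ G.verts := G.ends_mem ℓ hl v (by simp [he])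
  have h2 := two_le_degree_of_loop hl he
  have hvx : v ≠ x := by rintro rfl; omega
  have hvy : v ≠ y := by rintro rfl; omega
  have hverts := (hconn.eq_loop_of_degree_eq_two hl he (hdeg v hv hvx hvy)).1
  rw [hverts, Finset.mem_singleton] at hx hy
  exact hxy (hx.trans hy.symm)

theorem IsSignedCircuit.edges_eq_pair_of_loops (hS : G.IsSignedCircuit) {e f : ℕ} (hef : e ≠ f)
    (he : e ∈ G.edges) (hf : f ∈ G.edges) (hee : G.ends e = s(v, v))
    (hfe : G.ends f = s(v, v)) : G.edges = {e, f} := by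
  rcases hS with ⟨hC, -⟩ | ⟨x, y, P, C₁, C₂, hP, hC₁, hC₂, ⟨hPG, hC₁G, hC₂G, -, hE⟩, -, -, hV, -⟩
  · rw [(hC.eq_loop he hee).2, Finset.mem_singleton] at hf
    exact absurd hf.symm hef
  have hloop : ∀ ℓ ∈ G.edges, G.ends ℓ = s(v, v) →
      (C₁.verts = {v} ∧ C₁.edges = {ℓ}) ∨ (C₂.verts = {v} ∧ C₂.edges = {ℓ}) := by
    intro ℓ hl hle
    rw [hE, Finset.mem_union, Finset.mem_union] at hl
    rcases hl with (hl | hl) | hl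
    · exact (hP.not_loop hl ((hPG.2.2 ℓ hl).1.trans hle)).elim
    · exact Or.inl (hC₁.1.eq_loop hl ((hC₁G.2.2 ℓ hl).1.trans hle))
    · exact Or.inr (hC₂.1.eq_loop hl ((hC₂G.2.2 ℓ hl).1.trans hle))
  have hpath : C₁.verts = {v} → C₂.verts = {v} → P.edges = ∅ := by
    intro h₁ h₂
    rw [h₁, h₂, Finset.inter_self] at hV
    have hxv : v ∈ ({x} : Finset ℕ) ∩ {y} := hV ▸ Finset.mem_singleton_self v
    simp only [Finset.mem_inter, Finset.mem_singleton] at hxv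
    rcases hP with ⟨-, -, hPE⟩ | ⟨hxy, -⟩
    · exact hPE
    · exact absurd (hxv.1.symm.trans hxv.2) hxy
  rcases hloop e he hee with ⟨he₁, he₂⟩ | ⟨he₁, he₂⟩ <;>
    rcases hloop f hf hfe with ⟨hf₁, hf₂⟩ | ⟨hf₁, hf₂⟩
  · exact absurd (Finset.singleton_inj.mp (he₂.symm.trans hf₂)) hef
  · rw [hE, hpath he₁ hf₁, he₂, hf₂, Finset.empty_union]; rfl
  · rw [hE, hpath hf₁ he₁, he₂, hf₂, Finset.empty_union, Finset.union_comm]; rfl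
  · exact absurd (Finset.singleton_inj.mp (he₂.symm.trans hf₂)) hef

end Loops

section NegLoops

def negLoops (v : ℕ) (L : Finset ℕ) : SignedGraph where
  verts := {v}
  edges := L
  ends _ := s(v, v)
  sgn _ := -1
  ends_mem _ _ w hw := by simp_all
  sgn_unit _ _ := Or.inr rfl

variable {v : ℕ}

@[simp]
theorem negLoops_edges (L : Finset ℕ) : (negLoops v L).edges = L := rfl

theorem negLoops_mono {L L' : Finset ℕ} (h : L ⊆ L') : IsSubgraph (negLoops v L) (negLoops v L') :=
  ⟨subset_rfl, h, fun _ _ => ⟨rfl, rfl⟩⟩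

theorem isPath_negLoops_empty : (negLoops v ∅).IsPath v v := Or.inl ⟨rfl, rfl, rfl⟩

theorem isUnbalancedCircuit_negLoops_singleton (ℓ : ℕ) :
    (negLoops v {ℓ}).IsUnbalancedCircuit := by
  refine ⟨⟨⟨⟨v, Finset.mem_singleton_self v⟩, ?_⟩, ⟨ℓ, Finset.mem_singleton_self ℓ⟩, ?_⟩, ?_⟩
  · simp only [negLoops, Finset.mem_singleton]
    rintro u rfl w rfl
    rfl
  · simp [negLoops, degree]
  · simp [negLoops, negEdgeCount]

theorem isBarbell_negLoops_pair {e f : ℕ} (hef : e ≠ f) : (negLoops v {e, f}).IsBarbell := by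
  refine ⟨v, v, negLoops v ∅, negLoops v {e}, negLoops v {f}, isPath_negLoops_empty,
    isUnbalancedCircuit_negLoops_singleton e, isUnbalancedCircuit_negLoops_singleton f,
    ⟨negLoops_mono (by simp), negLoops_mono (by simp), negLoops_mono (by simp), by simp [negLoops],
      by simp [negLoops]⟩, ?_, ?_, ?_, ?_, ?_, ?_⟩ <;>
    simp [negLoops, hef]

def IsNegLoop (G : SignedGraph) (v ℓ : ℕ) : Prop :=
  ℓ ∈ G.edges ∧ G.ends ℓ = s(v, v) ∧ G.sgn ℓ = -1

theorem IsNegLoop.mem_verts {G : SignedGraph} {ℓ : ℕ} (h : G.IsNegLoop v ℓ) : v ∈ G.verts :=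
  G.ends_mem ℓ h.1 v (by simp [h.2.1])

theorem isSubgraph_negLoops {G : SignedGraph} {L : Finset ℕ} (hv : v ∈ G.verts)
    (hL : ∀ ℓ ∈ L, G.IsNegLoop v ℓ) : IsSubgraph (negLoops v L) G :=
  ⟨by simpa [negLoops] using hv, fun ℓ hℓ => (hL ℓ hℓ).1,
    fun ℓ hℓ => ⟨(hL ℓ hℓ).2.1.symm, (hL ℓ hℓ).2.2.symm⟩⟩

end NegLoops

section MapEdges

def mapEdges (G : SignedGraph) (σ : ℕ ≃ ℕ) : SignedGraph where
  verts := G.verts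
  edges := G.edges.map σ.toEmbedding
  ends := G.ends ∘ σ.symm
  sgn := G.sgn ∘ σ.symm
  ends_mem _ hg := G.ends_mem _ (Finset.mem_map_equiv.mp hg)
  sgn_unit _ hg := G.sgn_unit _ (Finset.mem_map_equiv.mp hg)

variable {G H : SignedGraph} (σ : ℕ ≃ ℕ)

@[simp]
theorem mem_mapEdges_edges {g : ℕ} : g ∈ (G.mapEdges σ).edges ↔ σ.symm g ∈ G.edges :=
  Finset.mem_map_equiv

theorem degree_mapEdges (v : ℕ) : (G.mapEdges σ).degree v = G.degree v := by
  simp [degree, mapEdges, Finset.sum_map]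

theorem adj_mapEdges : (G.mapEdges σ).Adj = G.Adj := by
  ext u w
  simp only [Adj, mapEdges, Finset.mem_map_equiv]
  exact ⟨fun ⟨g, hg, hends⟩ => ⟨σ.symm g, hg, hends⟩,
    fun ⟨g, hg, hends⟩ => ⟨σ g, by simpa using hg, by simpa using hends⟩⟩

theorem negEdgeCount_mapEdges : (G.mapEdges σ).negEdgeCount = G.negEdgeCount := by
  change (Finset.filter (fun e => G.sgn (σ.symm e) = -1) (G.edges.map σ.toEmbedding)).card = _
  rw [Finset.filter_map, Finset.card_map]
  simp [negEdgeCount]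

theorem Connected.mapEdges (h : G.Connected) : (G.mapEdges σ).Connected := by
  rw [Connected, adj_mapEdges]
  exact h

theorem IsCircuit.mapEdges (h : G.IsCircuit) : (G.mapEdges σ).IsCircuit :=
  ⟨h.1.mapEdges σ, h.2.1.map, fun v hv => (degree_mapEdges σ v).trans (h.2.2 v hv)⟩

theorem IsPath.mapEdges {x y : ℕ} (h : G.IsPath x y) : (G.mapEdges σ).IsPath x y := by
  simp only [IsPath, degree_mapEdges] at h ⊢
  rcases h with ⟨hxy, hV, hE⟩ | ⟨hxy, hconn, hrest⟩
  · exact Or.inl ⟨hxy, hV, show G.edges.map σ.toEmbedding = ∅ by rw [hE, Finset.map_empty]⟩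
  · exact Or.inr ⟨hxy, hconn.mapEdges σ, hrest⟩

theorem IsSubgraph.mapEdges (h : IsSubgraph H G) : IsSubgraph (H.mapEdges σ) (G.mapEdges σ) :=
  ⟨h.1, Finset.map_subset_map.mpr h.2.1, fun _ hg => h.2.2 _ (Finset.mem_map_equiv.mp hg)⟩

theorem IsSignedCircuit.mapEdges (h : G.IsSignedCircuit) : (G.mapEdges σ).IsSignedCircuit := by
  rcases h with ⟨hC, hbal⟩ | ⟨x, y, P, C₁, C₂, hP, hC₁, hC₂, ⟨hP', hC₁', hC₂', hV, hE⟩,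
    hPC₁, hPC₂, hC₁C₂, hPC₁', hPC₂', hC₁C₂'⟩
  · exact Or.inl ⟨hC.mapEdges σ, by rwa [negEdgeCount_mapEdges]⟩
  refine Or.inr ⟨x, y, P.mapEdges σ, C₁.mapEdges σ, C₂.mapEdges σ, hP.mapEdges σ,
    ⟨hC₁.1.mapEdges σ, by rw [negEdgeCount_mapEdges]; exact hC₁.2⟩,
    ⟨hC₂.1.mapEdges σ, by rw [negEdgeCount_mapEdges]; exact hC₂.2⟩,
    ⟨hP'.mapEdges σ, hC₁'.mapEdges σ, hC₂'.mapEdges σ, hV, ?_⟩, hPC₁, hPC₂, hC₁C₂, ?_, ?_, ?_⟩ <;>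
    simp only [SignedGraph.mapEdges, ← Finset.map_inter, ← Finset.map_union, Finset.map_eq_empty,
      hE, hPC₁', hPC₂', hC₁C₂']

theorem mapEdges_swap_eq_self {e f : ℕ} (he : e ∈ G.edges) (hf : f ∈ G.edges)
    (hends : G.ends e = G.ends f) (hsgn : G.sgn e = G.sgn f) :
    G.mapEdges (Equiv.swap e f) = G := by
  obtain ⟨V, E, ends, sgn, _, _⟩ := G
  simp only [mapEdges, mk.injEq, true_and, Equiv.symm_swap]
  refine ⟨?_, ?_, ?_⟩
  · ext g
    rw [Finset.mem_map_equiv, Equiv.symm_swap]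
    rcases eq_or_ne g e with rfl | hge
    · simp [hf, he]
    rcases eq_or_ne g f with rfl | hgf
    · simp [he, hf]
    · rw [Equiv.swap_apply_of_ne_of_ne hge hgf]
  all_goals
    funext g
    simp only [Function.comp_apply, Equiv.swap_apply_def]
    split_ifs <;> simp_all

end MapEdges

theorem coverCount_map_mapEdges (F : Multiset SignedGraph) (σ : ℕ ≃ ℕ) (e : ℕ) :
    coverCount (F.map (·.mapEdges σ)) e = coverCount F (σ.symm e) := by
  simp only [coverCount, Multiset.filter_map, Multiset.card_map, Function.comp_def,
    mem_mapEdges_edges]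

theorem MinimalCounterexample.hasSixCover_deleteEdges {G : SignedGraph}
    (hG : G.MinimalCounterexample) {D : Finset ℕ} {d : ℕ} (hd : d ∈ D) (hdG : d ∈ G.edges)
    (hcov : (G.deleteEdges D).Coverable) : (G.deleteEdges D).HasSixCover := by
  by_contra h6
  have hlt : (G.deleteEdges D).edges.card < G.edges.card :=
    Finset.card_lt_card <| (Finset.ssubset_iff_of_subset Finset.sdiff_subset).mpr
      ⟨d, hdG, fun h => (Finset.mem_sdiff.mp h).2 hd⟩
  exact hlt.not_ge (hG.2.2.2 _ hcov (hG.2.1.anti (deleteEdges_isSubgraph G D)) h6)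

section TwoNegLoops

variable {G : SignedGraph} {v e f : ℕ}

theorem IsSubgraph.mapEdges_swap {S : SignedGraph} (hS : IsSubgraph S G) (he : G.IsNegLoop v e)
    (hf : G.IsNegLoop v f) : IsSubgraph (S.mapEdges (Equiv.swap e f)) G := by
  have hG := mapEdges_swap_eq_self he.1 hf.1 (he.2.1.trans hf.2.1.symm)
    (he.2.2.trans hf.2.2.symm)
  exact hG ▸ hS.mapEdges _

theorem coverable_deleteEdges_singleton (hcov : G.Coverable) (he : G.IsNegLoop v e)
    (hf : G.IsNegLoop v f) (hef : e ≠ f)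
    (hsep : ∃ S, IsSubgraph S G ∧ IsSignedCircuit S ∧ e ∈ S.edges ∧ f ∉ S.edges) :
    (G.deleteEdges {f}).Coverable := by
  simp only [coverable_deleteEdges_iff, Finset.mem_singleton, Finset.disjoint_singleton_right]
  intro g hg hgf
  obtain ⟨T, hTG, hT, hgT⟩ := coverable_iff.mp hcov g hg
  by_cases hfT : f ∈ T.edges
  swap
  · exact ⟨T, hTG, hT, hgT, hfT⟩
  by_cases heT : e ∈ T.edges
  · have hTE := hT.edges_eq_pair_of_loops hef heT hfT ((hTG.2.2 e heT).1.trans he.2.1)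
      ((hTG.2.2 f hfT).1.trans hf.2.1)
    obtain rfl : g = e := by simpa [hTE, hgf] using hgT
    exact hsep
  · have hge : g ≠ e := fun h => heT (h ▸ hgT)
    refine ⟨T.mapEdges (Equiv.swap e f), hTG.mapEdges_swap he hf, hT.mapEdges _, ?_, ?_⟩
    · simpa [Equiv.swap_apply_of_ne_of_ne hge hgf] using hgT
    · simpa using heT

theorem coverable_deleteEdges_pair (hcov : G.Coverable) (he : G.IsNegLoop v e)
    (hf : G.IsNegLoop v f) (hef : e ≠ f)
    (hinsep : ∀ S, IsSubgraph S G → IsSignedCircuit S → e ∈ S.edges → f ∈ S.edges) :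
    (G.deleteEdges {e, f}).Coverable := by
  simp only [coverable_deleteEdges_iff, Finset.mem_insert, Finset.mem_singleton, not_or,
    Finset.disjoint_insert_right, Finset.disjoint_singleton_right]
  rintro g hg ⟨hge, hgf⟩
  obtain ⟨T, hTG, hT, hgT⟩ := coverable_iff.mp hcov g hg
  have heT : e ∉ T.edges := by
    intro heT
    have hfT := hinsep T hTG hT heT
    have hTE := hT.edges_eq_pair_of_loops hef heT hfT ((hTG.2.2 e heT).1.trans he.2.1)
      ((hTG.2.2 f hfT).1.trans hf.2.1)
    simp [hTE, hge, hgf] at hgT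
  -- Otherwise exchanging `e` and `f` would give a signed circuit through `e` avoiding `f`.
  have hfT : f ∉ T.edges := fun hfT =>
    heT (by simpa using hinsep _ (hTG.mapEdges_swap he hf) (hT.mapEdges _) (by simpa using hfT))
  exact ⟨T, hTG, hT, hgT, heT, hfT⟩

theorem isSubgraph_negLoops_pair (he : G.IsNegLoop v e) (hf : G.IsNegLoop v f) :
    IsSubgraph (negLoops v {e, f}) G :=
  isSubgraph_negLoops he.mem_verts (by simp [he, hf])

theorem hasSixCover_of_hasSixCover_deleteEdges_pair (he : G.IsNegLoop v e)
    (hf : G.IsNegLoop v f) (hef : e ≠ f) (h6 : (G.deleteEdges {e, f}).HasSixCover) :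
    G.HasSixCover := by
  obtain ⟨F, hF, hFc⟩ := h6
  refine ⟨F + Multiset.replicate 6 (negLoops v {e, f}), fun S hS => ?_, fun g hg => ?_⟩
  · rcases Multiset.mem_add.mp hS with hS | hS
    · exact ⟨(isSubgraph_deleteEdges_iff.mp (hF S hS).1).1, (hF S hS).2⟩
    · rw [Multiset.eq_of_mem_replicate hS]
      exact ⟨isSubgraph_negLoops_pair he hf, Or.inr (isBarbell_negLoops_pair hef)⟩
  rw [coverCount_add, coverCount_replicate, negLoops_edges]
  by_cases hgD : g ∈ ({e, f} : Finset ℕ)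
  · rw [if_pos hgD, coverCount_eq_zero fun S hS => (hF S hS).1.notMem_of_deleteEdges hgD]
  · rw [if_neg hgD, hFc g (Finset.mem_sdiff.mpr ⟨hg, hgD⟩)]

theorem hasSixCover_of_hasSixCover_deleteEdges_singleton (he : G.IsNegLoop v e)
    (hf : G.IsNegLoop v f) (hef : e ≠ f) (h6 : (G.deleteEdges {f}).HasSixCover) :
    G.HasSixCover := by
  obtain ⟨F, hF, hFc⟩ := h6
  have hfF : ∀ S ∈ F, f ∉ S.edges := fun S hS =>
    (hF S hS).1.notMem_of_deleteEdges (Finset.mem_singleton_self f)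
  have heF : coverCount F e = 6 := hFc e (Finset.mem_sdiff.mpr ⟨he.1, by simpa using hef⟩)
  obtain ⟨A, hA, hAcard⟩ := Multiset.exists_le_card_eq (s := F.filter (e ∈ ·.edges)) (n := 3)
    (by unfold coverCount at heF; omega)
  have hAe : ∀ S ∈ A, e ∈ S.edges := fun S hS =>
    (Multiset.mem_filter.mp (Multiset.mem_of_le hA hS)).2
  obtain ⟨R, rfl⟩ := Multiset.le_iff_exists_add.mp (hA.trans (Multiset.filter_le _ _))
  refine ⟨R + A.map (·.mapEdges (Equiv.swap e f)) + Multiset.replicate 3 (negLoops v {e, f}),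
    fun S hS => ?_, fun g hg => ?_⟩
  · have hsub : ∀ S ∈ A + R, IsSubgraph S G ∧ IsSignedCircuit S := fun S hS =>
      ⟨(isSubgraph_deleteEdges_iff.mp (hF S hS).1).1, (hF S hS).2⟩
    simp only [Multiset.mem_add, Multiset.mem_map, Multiset.mem_replicate] at hS
    rcases hS with (hS | ⟨T, hT, rfl⟩) | ⟨-, rfl⟩
    · exact hsub S (Multiset.mem_add.mpr (Or.inr hS))
    · obtain ⟨hTG, hTc⟩ := hsub T (Multiset.mem_add.mpr (Or.inl hT))
      exact ⟨hTG.mapEdges_swap he hf, hTc.mapEdges _⟩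
    · exact ⟨isSubgraph_negLoops_pair he hf, Or.inr (isBarbell_negLoops_pair hef)⟩
  rw [coverCount_add, coverCount_add, coverCount_map_mapEdges, coverCount_replicate,
    negLoops_edges, Equiv.symm_swap]
  rw [coverCount_add, coverCount_eq_card hAe, hAcard] at heF
  rcases eq_or_ne g f with rfl | hgf
  · rw [Equiv.swap_apply_right, coverCount_eq_card hAe, hAcard,
      coverCount_eq_zero fun S hS => hfF S (Multiset.mem_add.mpr (Or.inr hS)), if_pos (by simp)]
  rcases eq_or_ne g e with rfl | hge
  · rw [Equiv.swap_apply_left,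
      coverCount_eq_zero fun S hS => hfF S (Multiset.mem_add.mpr (Or.inl hS)), if_pos (by simp)]
    omega
  · have hgF := hFc g (Finset.mem_sdiff.mpr ⟨hg, by simpa using hgf⟩)
    rw [coverCount_add] at hgF
    rw [Equiv.swap_apply_of_ne_of_ne hge hgf, if_neg (by simp [hge, hgf])]
    omega

end TwoNegLoops

/-- **Claim 1(1).** In a minimal counterexample, no two negative loops share a
common vertex. -/
theorem minCE_no_two_negative_loops_at_a_vertex
    (G : SignedGraph) (hmin : MinimalCounterexample G) :
    ¬ ∃ (v e f : ℕ), e ∈ G.edges ∧ f ∈ G.edges ∧ e ≠ f ∧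
        G.ends e = s(v, v) ∧ G.ends f = s(v, v) ∧
        G.sgn e = -1 ∧ G.sgn f = -1 := by
  rintro ⟨v, e, f, heG, hfG, hef, hee, hfe, hes, hfs⟩
  have he : G.IsNegLoop v e := ⟨heG, hee, hes⟩
  have hf : G.IsNegLoop v f := ⟨hfG, hfe, hfs⟩
  apply hmin.2.2.1
  by_cases hsep : ∃ S, IsSubgraph S G ∧ IsSignedCircuit S ∧ e ∈ S.edges ∧ f ∉ S.edges
  · have hcov := coverable_deleteEdges_singleton hmin.1 he hf hef hsep
    exact hasSixCover_of_hasSixCover_deleteEdges_singleton he hf hef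
      (hmin.hasSixCover_deleteEdges (Finset.mem_singleton_self f) hfG hcov)
  · push Not at hsep
    have hcov := coverable_deleteEdges_pair hmin.1 he hf hef hsep
    exact hasSixCover_of_hasSixCover_deleteEdges_pair he hf hef
      (hmin.hasSixCover_deleteEdges (Finset.mem_insert_self e {f}) heG hcov)

end SignedGraph
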